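/- arXiv:1805.09586 — 2 statements merged into one kernel-verified Lean document; each statement's English description precedes it below -/
import Mathlib

section
/- Let T_{(r,t)} be the r-regular 2H-tree with r ≥ 1 and t ≥ 1. If t ≤ 2r − 1, then χ'_s(T_{(r,t)}) ≤ r + ⌊t/2⌋. -/
/-!
Every path with four edges in a 2H-tree runs leaf–hub–root–hub–leaf, so a proper edge colouring
is a star edge colouring unless some pendant edge at `uᵢ` has the colour of `uuᵢ'` while some
pendant edge at `uᵢ'` has the colour of `uuᵢ`. Colour `uuᵢ` by `i < t`. At `uᵢ`, give the first
`m = ⌊(t-1)/2⌋` pendant edges the colours `i+1, …, i+m` (mod `t`) and the others fresh colours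
`t, t+1, …`. A forbidden pair would need both `i' - i` and `i - i'` to lie in `[1, m]` mod `t`,
impossible as `2m < t`. The fresh colours needed at `uᵢ` number `r - 1 - m = r + ⌊t/2⌋ - t`,
and `t ≤ 2r` makes room for the `t` root colours, so `r + ⌊t/2⌋` colours suffice.
-/

/-- A star edge coloring of `G` with `k` colors: a proper edge coloring such that
no path or cycle of length four (four edges) is bi-colored. The walk
`a-b-x-y-z` ranges over all paths of length four (`a,b,x,y,z` distinct) and all
cycles of length four (`z = a` and `a,b,x,y` distinct). -/
def IsStarEdgeColoring {V : Type*} (G : SimpleGraph V) {k : ℕ} (c : Sym2 V → Fin k) : Prop :=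
  (∀ ⦃u v w : V⦄, G.Adj u v → G.Adj u w → v ≠ w → c s(u, v) ≠ c s(u, w)) ∧
  (∀ a b x y z : V, G.Adj a b → G.Adj b x → G.Adj x y → G.Adj y z →
    a ≠ x → a ≠ y → b ≠ y → b ≠ z → x ≠ z →
    ¬(c s(a, b) = c s(x, y) ∧ c s(b, x) = c s(y, z)))

/-- The star chromatic index of `G`: the least `k` admitting a star edge coloring. -/
noncomputable def starChromaticIndex {V : Type*} (G : SimpleGraph V) : ℕ :=
  sInf {k : ℕ | ∃ c : Sym2 V → Fin k, IsStarEdgeColoring G c}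
/-- The 2H-tree `T_{n₁,…,n_t}`: a root (`none`), its `t` neighbours `uᵢ = some ⟨i, none⟩`,
and for each `i`, `n i` further leaves `some ⟨i, some j⟩` adjacent to `uᵢ`. -/
def twoHTree (t : ℕ) (n : Fin t → ℕ) :
    SimpleGraph (Option (Σ i : Fin t, Option (Fin (n i)))) :=
  SimpleGraph.fromRel (fun x y =>
    (x = none ∧ ∃ i : Fin t, y = some ⟨i, none⟩) ∨
    (∃ (i : Fin t) (j : Fin (n i)), x = some ⟨i, none⟩ ∧ y = some ⟨i, some j⟩))

namespace TwoHTree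

open Function

variable {t k : ℕ} {n : Fin t → ℕ}

abbrev Vertex (t : ℕ) (n : Fin t → ℕ) := Option (Σ i : Fin t, Option (Fin (n i)))

abbrev hub (i : Fin t) : Vertex t n := some ⟨i, none⟩

abbrev leaf (i : Fin t) (j : Fin (n i)) : Vertex t n := some ⟨i, some j⟩

lemma adj_none_iff {y : Vertex t n} : (twoHTree t n).Adj none y ↔ ∃ i, y = hub i := by
  rcases y with _ | ⟨i', _ | j⟩ <;> simp [twoHTree]

lemma adj_hub_iff {i : Fin t} {y : Vertex t n} :
    (twoHTree t n).Adj (hub i) y ↔ y = none ∨ ∃ j, y = leaf i j := by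
  rcases y with _ | ⟨i', _ | j⟩
  · simp [twoHTree]
  all_goals obtain rfl | hi := eq_or_ne i i' <;> simp [twoHTree, *, eq_comm]

lemma adj_leaf_iff {i : Fin t} {j : Fin (n i)} {y : Vertex t n} :
    (twoHTree t n).Adj (leaf i j) y ↔ y = hub i := by
  rcases y with _ | ⟨i', _ | j'⟩
  · simp [twoHTree]
  all_goals obtain rfl | hi := eq_or_ne i i' <;> simp [twoHTree, *, eq_comm]

section EdgeColoring

variable [NeZero k] (a : Fin t → Fin k) (b : ∀ i, Fin (n i) → Fin k)

def edgeColorOf : Vertex t n → Vertex t n → Fin k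
  | none, some ⟨i, none⟩ => a i
  | some ⟨i, none⟩, none => a i
  | some ⟨_, none⟩, some ⟨i, some j⟩ => b i j
  | some ⟨i, some j⟩, some ⟨_, none⟩ => b i j
  | _, _ => 0

lemma edgeColorOf_comm (x y : Vertex t n) : edgeColorOf a b x y = edgeColorOf a b y x := by
  rcases x with _ | ⟨i, _ | j⟩ <;> rcases y with _ | ⟨i', _ | j'⟩ <;> rfl

def edgeColoring : Sym2 (Vertex t n) → Fin k :=
  Sym2.lift ⟨edgeColorOf a b, edgeColorOf_comm a b⟩

variable {a b}

theorem isStarEdgeColoring_edgeColoring (ha : Injective a) (hb : ∀ i, Injective (b i))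
    (hab : ∀ i j, b i j ≠ a i) (hswap : ∀ i i' j j', i ≠ i' → b i j = a i' → b i' j' ≠ a i) :
    IsStarEdgeColoring (twoHTree t n) (edgeColoring a b) := by
  refine ⟨fun u v w huv huw hvw => ?_, fun a' b' x y z hab' hbx hxy hyz hax _ hby _ hxz => ?_⟩
  · rcases u with _ | ⟨i, _ | j⟩
    · obtain ⟨i, rfl⟩ := adj_none_iff.1 huv
      obtain ⟨i', rfl⟩ := adj_none_iff.1 huw
      exact fun h => hvw (congrArg hub (ha h))
    · rcases adj_hub_iff.1 huv with rfl | ⟨j, rfl⟩ <;>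
        rcases adj_hub_iff.1 huw with rfl | ⟨j', rfl⟩
      · exact absurd rfl hvw
      · exact (hab i j').symm
      · exact hab i j
      · exact fun h => hvw (congrArg (leaf i) (hb i h))
    · exact absurd ((adj_leaf_iff.1 huv).trans (adj_leaf_iff.1 huw).symm) hvw
  · rintro ⟨h₁, h₂⟩
    rcases x with _ | ⟨i, _ | j⟩
    · obtain ⟨i, rfl⟩ := adj_none_iff.1 hbx.symm
      obtain ⟨i', rfl⟩ := adj_none_iff.1 hxy
      obtain rfl | ⟨j, rfl⟩ := adj_hub_iff.1 hab'.symm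
      · exact hax rfl
      obtain rfl | ⟨j', rfl⟩ := adj_hub_iff.1 hyz
      · exact hxz rfl
      exact hswap i i' j j' (fun h => hby (congrArg hub h)) h₁ h₂.symm
    · rcases adj_hub_iff.1 hbx.symm with rfl | ⟨j, rfl⟩
      · obtain rfl | ⟨j', rfl⟩ := adj_hub_iff.1 hxy
        · exact hby rfl
        · exact hxz (adj_leaf_iff.1 hyz).symm
      · exact hax (adj_leaf_iff.1 hab'.symm)
    · exact hby ((adj_leaf_iff.1 hbx.symm).trans (adj_leaf_iff.1 hxy).symm)

end EdgeColoring

end TwoHTree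

namespace RegularTwoHTree

open TwoHTree

variable {r t i i' j j' : ℕ}

def pendantColor (t i j : ℕ) : ℕ :=
  if j < (t - 1) / 2 then
    -- `(i + 1 + j) % t`, written out so that `omega` can handle it
    if i + 1 + j < t then i + 1 + j else i + 1 + j - t
  else t + (j - (t - 1) / 2)

lemma pendantColor_lt (hi : i < t) (hj : j < r - 1) (h : t ≤ 2 * r) :
    pendantColor t i j < r + t / 2 := by
  unfold pendantColor; split_ifs <;> omega

lemma pendantColor_ne (hi : i < t) : pendantColor t i j ≠ i := by
  unfold pendantColor; split_ifs <;> omega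

lemma pendantColor_injective (hi : i < t) : Function.Injective (pendantColor t i) := by
  intro j j'
  unfold pendantColor; split_ifs <;> omega

lemma pendantColor_swap (hi : i < t) (hi' : i' < t) (h : pendantColor t i j = i') :
    pendantColor t i' j' ≠ i := by
  unfold pendantColor at *; split_ifs at * <;> omega

theorem exists_isStarEdgeColoring (hr : 1 ≤ r) (h : t ≤ 2 * r) :
    ∃ c : Sym2 (Vertex t fun _ => r - 1) → Fin (r + t / 2),
      IsStarEdgeColoring (twoHTree t fun _ => r - 1) c := by
  have : NeZero (r + t / 2) := ⟨by omega⟩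
  have hk : t ≤ r + t / 2 := by omega
  refine ⟨edgeColoring (fun i => Fin.castLE hk i)
    (fun i j => ⟨pendantColor t i j, pendantColor_lt i.2 j.2 h⟩),
    isStarEdgeColoring_edgeColoring (Fin.castLE_injective hk) (fun i j j' hj => ?_)
      (fun i j hj => ?_) (fun i i' j j' _ h₁ h₂ => ?_)⟩
  · exact Fin.ext (pendantColor_injective i.2 (congrArg Fin.val hj))
  · exact pendantColor_ne i.2 (congrArg Fin.val hj)
  · exact pendantColor_swap i.2 i'.2 (congrArg Fin.val h₁) (congrArg Fin.val h₂)

end RegularTwoHTree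

theorem regular_twoHTree_star_le_of_small_t_general (r t : ℕ) (hr : 1 ≤ r)
    (h : t ≤ 2 * r - 1) :
    starChromaticIndex (twoHTree t (fun _ => r - 1)) ≤ r + t / 2 :=
  Nat.sInf_le (RegularTwoHTree.exists_isStarEdgeColoring hr (by omega))

/-- Lemma 6.2, first case. For the `r`-regular 2H-tree `T_{(r,t)}`
(every neighbour of the root has degree `r`, i.e. `nᵢ = r - 1`), if `t ≤ 2r - 1` then
`χ'_s(T_{(r,t)}) ≤ r + ⌊t/2⌋`. -/
theorem regular_twoHTree_star_le_of_small_t (r t : ℕ) (hr : 1 ≤ r) (ht : 1 ≤ t)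
    (h : t ≤ 2 * r - 1) :
    starChromaticIndex (twoHTree t (fun _ => r - 1)) ≤ r + t / 2 :=
  regular_twoHTree_star_le_of_small_t_general r t hr h
end

section
/- Let T_{(r,t)} be the r-regular 2H-tree with r ≥ 1 and t ≥ 1. If t ≥ 2r, then χ'_s(T_{(r,t)}) = t. -/
/-!
The `t` edges at the root force `t` colours. Conversely, give the root weight `0`, its neighbour
`uᵢ` weight `i` and the `j`-th leaf below any `uᵢ` weight `j + 1`, and colour each edge by the sum
of the weights of its ends modulo `t`. The leaf weights at `uᵢ` are distinct and nonzero
modulo `t`, so the colouring is proper. The only paths with four edges run leaf–`uᵢ`–root–`uᵢ'`–leaf,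
and a bicoloured one would make `(j + 1) + (j' + 1)` vanish modulo `t`, which is impossible when
`n i + n i' < t`; for the `r`-regular tree this is `2 (r - 1) < t`.
-/

open Function

open Fin.NatCast in
theorem Fin.natCast_ne_zero_of_pos_of_lt {a t : ℕ} [NeZero t] (h0 : 0 < a) (ha : a < t) :
    (a : Fin t) ≠ 0 := by
  rw [Ne, Fin.natCast_eq_zero]
  exact Nat.not_dvd_of_pos_of_lt h0 ha

section StarEdgeColoring

variable {V : Type*} {G : SimpleGraph V} {k : ℕ} {c : Sym2 V → Fin k}

theorem IsStarEdgeColoring.card_le {ι : Type*} [Fintype ι] (hc : IsStarEdgeColoring G c)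
    {v : V} {f : ι → V} (hf : Injective f) (hadj : ∀ i, G.Adj v (f i)) :
    Fintype.card ι ≤ k := by
  have hinj : Injective fun i => c s(v, f i) := fun i i' hii =>
    by_contra fun hne => hc.1 (hadj i) (hadj i') (hf.ne hne) hii
  simpa using Fintype.card_le_of_injective _ hinj

theorem starChromaticIndex_le (hc : IsStarEdgeColoring G c) : starChromaticIndex G ≤ k :=
  Nat.sInf_le ⟨c, hc⟩

theorem card_le_starChromaticIndex {ι : Type*} [Fintype ι] (hc : IsStarEdgeColoring G c)
    {v : V} {f : ι → V} (hf : Injective f) (hadj : ∀ i, G.Adj v (f i)) :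
    Fintype.card ι ≤ starChromaticIndex G := by
  obtain ⟨c', hc'⟩ :=
    Nat.sInf_mem (⟨k, c, hc⟩ : {k | ∃ c : Sym2 V → Fin k, IsStarEdgeColoring G c}.Nonempty)
  exact hc'.card_le hf hadj

end StarEdgeColoring

namespace twoHTree

variable {t : ℕ} {n : Fin t → ℕ}

theorem adj_root_iff {y} : (twoHTree t n).Adj none y ↔ ∃ i, y = some ⟨i, none⟩ := by
  simp only [twoHTree, SimpleGraph.fromRel_adj]; aesop

theorem adj_hub_iff {i y} : (twoHTree t n).Adj (some ⟨i, none⟩) y ↔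
    y = none ∨ ∃ j, y = some ⟨i, some j⟩ := by
  simp only [twoHTree, SimpleGraph.fromRel_adj]; aesop

theorem adj_leaf_iff {i j y} : (twoHTree t n).Adj (some ⟨i, some j⟩) y ↔ y = some ⟨i, none⟩ := by
  simp only [twoHTree, SimpleGraph.fromRel_adj]; aesop

theorem exists_of_path_four {a b x y z : Option (Σ i : Fin t, Option (Fin (n i)))}
    (hab : (twoHTree t n).Adj a b) (hbx : (twoHTree t n).Adj b x)
    (hxy : (twoHTree t n).Adj x y) (hyz : (twoHTree t n).Adj y z)
    (hax : a ≠ x) (hby : b ≠ y) (hxz : x ≠ z) :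
    ∃ i j i' j', a = some ⟨i, some j⟩ ∧ b = some ⟨i, none⟩ ∧ x = none ∧
      y = some ⟨i', none⟩ ∧ z = some ⟨i', some j'⟩ := by
  rcases x with _ | ⟨i, _ | j⟩
  · obtain ⟨i, rfl⟩ := adj_root_iff.1 hbx.symm
    obtain ⟨i', rfl⟩ := adj_root_iff.1 hxy
    obtain rfl | ⟨j, rfl⟩ := adj_hub_iff.1 hab.symm
    · exact absurd rfl hax
    obtain rfl | ⟨j', rfl⟩ := adj_hub_iff.1 hyz
    · exact absurd rfl hxz
    exact ⟨i, j, i', j', rfl, rfl, rfl, rfl, rfl⟩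
  · obtain rfl | ⟨j, rfl⟩ := adj_hub_iff.1 hbx.symm
    · obtain rfl | ⟨j', rfl⟩ := adj_hub_iff.1 hxy
      · exact absurd rfl hby
      · exact absurd (adj_leaf_iff.1 hyz).symm hxz
    · exact absurd (adj_leaf_iff.1 hab.symm) hax
  · exact absurd ((adj_leaf_iff.1 hbx.symm).trans (adj_leaf_iff.1 hxy).symm) hby

variable [NeZero t]

open Fin.CommRing

def weight : Option (Σ i : Fin t, Option (Fin (n i))) → Fin t
  | none => 0
  | some ⟨i, none⟩ => i
  | some ⟨_, some j⟩ => (j + 1 : ℕ)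

def starColoring : Sym2 (Option (Σ i : Fin t, Option (Fin (n i)))) → Fin t :=
  Sym2.lift ⟨fun x y => weight x + weight y, fun _ _ => add_comm _ _⟩

theorem isStarEdgeColoring_starColoring (hn : ∀ i i', n i + n i' < t) :
    IsStarEdgeColoring (twoHTree t n) starColoring := by
  have leaf_ne_zero : ∀ i (j : Fin (n i)), ((j + 1 : ℕ) : Fin t) ≠ 0 := fun i j =>
    Fin.natCast_ne_zero_of_pos_of_lt j.1.succ_pos (by have := hn i i; omega)
  refine ⟨fun u v w huv huw hvw hc => ?_, fun a b x y z hab hbx hxy hyz hax _ hby _ hxz hc => ?_⟩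
  · rcases u with _ | ⟨i, _ | j⟩
    · obtain ⟨i, rfl⟩ := adj_root_iff.1 huv
      obtain ⟨i', rfl⟩ := adj_root_iff.1 huw
      have hii : i = i' := by simpa [starColoring, weight] using hc
      exact hvw (hii ▸ rfl)
    · obtain rfl | ⟨j, rfl⟩ := adj_hub_iff.1 huv <;> obtain rfl | ⟨j', rfl⟩ := adj_hub_iff.1 huw
      · exact hvw rfl
      · exact leaf_ne_zero i j' (by simpa [starColoring, weight] using hc.symm)
      · exact leaf_ne_zero i j (by simpa [starColoring, weight] using hc)
      · have hjj : ((j + 1 : ℕ) : Fin t) = ((j' + 1 : ℕ) : Fin t) := by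
          simpa [starColoring, weight] using hc
        have hlt := hn i i
        have hval : j.1 + 1 = j'.1 + 1 := CharP.natCast_injOn_Iio (Fin t) t
          (show j.1 + 1 < t by omega) (show j'.1 + 1 < t by omega) hjj
        exact hvw (by simp [Fin.ext (Nat.succ_injective hval)])
    · exact hvw ((adj_leaf_iff.1 huv).trans (adj_leaf_iff.1 huw).symm)
  · obtain ⟨i, j, i', j', rfl, rfl, rfl, rfl, rfl⟩ := exists_of_path_four hab hbx hxy hyz hax hby hxz
    obtain ⟨h₁, h₂⟩ := hc
    simp only [starColoring, weight, Sym2.lift_mk, zero_add, add_zero] at h₁ h₂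
    have hsum : ((j + 1 + (j' + 1) : ℕ) : Fin t) = 0 := by
      push_cast at h₁ h₂ ⊢
      linear_combination h₁ - h₂
    exact Fin.natCast_ne_zero_of_pos_of_lt (by omega) (by have := hn i i'; omega) hsum

theorem starChromaticIndex_eq (hn : ∀ i i', n i + n i' < t) :
    starChromaticIndex (twoHTree t n) = t := by
  have hstar := isStarEdgeColoring_starColoring hn
  refine le_antisymm (starChromaticIndex_le hstar) ?_
  have hroot := card_le_starChromaticIndex hstar (v := none) (f := fun i => some ⟨i, none⟩)
    (fun i i' h => (Sigma.mk.inj (Option.some_injective _ h)).1) (fun i => adj_root_iff.2 ⟨i, rfl⟩)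
  simpa using hroot

end twoHTree

theorem regular_twoHTree_star_eq_of_large_t_general (r t : ℕ) (ht : 1 ≤ t)
    (h : 2 * r ≤ t) :
    starChromaticIndex (twoHTree t (fun _ => r - 1)) = t := by
  have : NeZero t := ⟨by omega⟩
  exact twoHTree.starChromaticIndex_eq fun _ _ => by omega

/-- Corollary 6.4, second case. For the `r`-regular 2H-tree `T_{(r,t)}`,
if `t ≥ 2r` then `χ'_s(T_{(r,t)}) = t`. -/
theorem regular_twoHTree_star_eq_of_large_t (r t : ℕ) (hr : 1 ≤ r) (ht : 1 ≤ t)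
    (h : 2 * r ≤ t) :
    starChromaticIndex (twoHTree t (fun _ => r - 1)) = t :=
  regular_twoHTree_star_eq_of_large_t_general r t ht h
end
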